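/- Let X = ℕ₀ with d(m,n) = |m − n| and T(n) = ⌊n/2⌋. Then for all pairwise distinct m,n,p ∈ X, P(Tm,Tn,Tp) ≤ (3/4)·P(m,n,p), i.e., T is a uniform triangle-perimeter contraction with constant 3/4. -/

import Mathlib

/-!
The perimeter of three real points is twice the length of the interval they span. Halving commutes
with `max` and `min`, so it suffices to compare `⌊M/2⌋ - ⌊μ/2⌋` with `M - μ`, where `μ < M` are the
smallest and largest of the three points. Halving shrinks a span `s` to at most `(s + 1) / 2`, which
is at most `3 s / 4` once `s ≥ 2`, and three distinct naturals span at least `2`.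
-/

def perimeter {X : Type*} [PseudoMetricSpace X] (a b c : X) : ℝ :=
  dist a b + dist b c + dist a c

lemma Real.perimeter_eq_two_mul_max_sub_min (a b c : ℝ) :
    perimeter a b c = 2 * (max (max a b) c - min (min a b) c) := by
  simp only [perimeter, Real.dist_eq]
  rcases le_total a b with hab | hab <;> rcases le_total b c with hbc | hbc <;>
    rcases le_total a c with hac | hac <;>
    simp [abs_of_nonneg, abs_of_nonpos, hab, hbc, hac] <;> linarith

lemma Nat.perimeter_eq_two_mul_max_sub_min (m n p : ℕ) :
    perimeter m n p = 2 * ((max (max m n) p : ℕ) - (min (min m n) p : ℕ) : ℝ) := by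
  rw [perimeter, ← Nat.dist_cast_real, ← Nat.dist_cast_real, ← Nat.dist_cast_real]
  push_cast
  exact Real.perimeter_eq_two_mul_max_sub_min m n p

lemma Nat.min_add_two_le_max_of_pairwise_ne {m n p : ℕ} (hmn : m ≠ n) (hnp : n ≠ p) (hmp : m ≠ p) :
    min (min m n) p + 2 ≤ max (max m n) p := by
  omega

lemma Nat.four_mul_half_sub_half_le {a b : ℕ} (h : a + 2 ≤ b) :
    4 * ((b / 2 : ℕ) - (a / 2 : ℕ) : ℝ) ≤ 3 * ((b : ℝ) - a) := by
  have hnat : 4 * (b / 2) + 3 * a ≤ 3 * b + 4 * (a / 2) := by omega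
  have hreal : (4 * (b / 2 : ℕ) + 3 * a : ℝ) ≤ 3 * b + 4 * (a / 2 : ℕ) := by exact_mod_cast hnat
  linarith

theorem stmt_9 :
    ∀ m n p : ℕ, m ≠ n → n ≠ p → m ≠ p →
      dist (m / 2) (n / 2) + dist (n / 2) (p / 2) + dist (m / 2) (p / 2) ≤
        (3/4) * (dist m n + dist n p + dist m p) := by
  intro m n p hmn hnp hmp
  have half_mono : Monotone (· / 2 : ℕ → ℕ) := fun _ _ h => Nat.div_le_div_right h
  change perimeter (m / 2) (n / 2) (p / 2) ≤ 3 / 4 * perimeter m n p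
  rw [Nat.perimeter_eq_two_mul_max_sub_min, Nat.perimeter_eq_two_mul_max_sub_min,
    ← half_mono.map_max, ← half_mono.map_max, ← half_mono.map_min, ← half_mono.map_min]
  have hspan := Nat.four_mul_half_sub_half_le (Nat.min_add_two_le_max_of_pairwise_ne hmn hnp hmp)
  linarith
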